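/- Let S be a random vector uniformly distributed on the four points (1,0,2,0), (0,2,1,0), (1,0,0,2), (0,2,0,1) in ℝ^4 (each with probability 1/4). Then S is not NRD, not NLTD, and not NRTD. In particular, E[S_3 | S_1 = 0] = 1/2 < 1 = E[S_3 | S_1 = 1], E[S_3 | S_1 ≤ 0] = 1/2 < 3/4 = E[S_3 | S_1 ≤ 1], and E[S_3 | S_1 ≥ 0] = 3/4 < 1 = E[S_3 | S_1 ≥ 1]. -/

import Mathlib

open scoped Classical
open Finset

noncomputable section

/-- Probability of the event `A` on a finite sample space with weights `w`. -/
def Pr {Ω : Type*} [Fintype Ω] (w : Ω → ℝ) (A : Ω → Prop) : ℝ :=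
  ∑ ω : Ω, if A ω then w ω else 0

/-- Expectation of `f` on a finite sample space with weights `w`. -/
def Expec {Ω : Type*} [Fintype Ω] (w : Ω → ℝ) (f : Ω → ℝ) : ℝ :=
  ∑ ω : Ω, w ω * f ω

/-- Conditional expectation of `f` given the event `A` under weights `w`. -/
def CExp {Ω : Type*} [Fintype Ω] (w : Ω → ℝ) (A : Ω → Prop) (f : Ω → ℝ) : ℝ :=
  (∑ ω : Ω, if A ω then w ω * f ω else 0) / Pr w A

/-- `[X_I | A] ≤_st [X_I | B]` : the conditional distribution of the subvector `X_I`
given the event `A` is dominated, in the usual stochastic order, by the conditional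
distribution of `X_I` given `B`; i.e. conditional expectations of every bounded
coordinatewise increasing function compare. -/
def CondSubvecStochLE {Ω : Type*} [Fintype Ω] {n : ℕ} (w : Ω → ℝ)
    (X : Ω → Fin n → ℝ) (I : Finset (Fin n)) (A B : Ω → Prop) : Prop :=
  ∀ φ : ({i : Fin n // i ∈ I} → ℝ) → ℝ, Monotone φ → (∃ C, ∀ v, |φ v| ≤ C) →
    CExp w A (fun ω => φ fun i => X ω i.1) ≤ CExp w B (fun ω => φ fun i => X ω i.1)

/-- Negative regression dependence: `[X_I | X_J = x_J] ≥_st [X_I | X_J = x_J*]`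
whenever `x_J ≤ x_J*` componentwise and both conditioning events have
positive probability. -/
def IsNRD {Ω : Type*} [Fintype Ω] {n : ℕ} (w : Ω → ℝ) (X : Ω → Fin n → ℝ) : Prop :=
  ∀ I J : Finset (Fin n), Disjoint I J → ∀ x y : Fin n → ℝ, (∀ j ∈ J, x j ≤ y j) →
    0 < Pr w (fun ω => ∀ j ∈ J, X ω j = x j) →
    0 < Pr w (fun ω => ∀ j ∈ J, X ω j = y j) →
    CondSubvecStochLE w X I (fun ω => ∀ j ∈ J, X ω j = y j)
      (fun ω => ∀ j ∈ J, X ω j = x j)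

/-- Negative left-tail dependence: `[X_I | X_J ≤ x_J] ≥_st [X_I | X_J ≤ x_J*]`
whenever `x_J ≤ x_J*` componentwise and both conditioning events have
positive probability. -/
def IsNLTD {Ω : Type*} [Fintype Ω] {n : ℕ} (w : Ω → ℝ) (X : Ω → Fin n → ℝ) : Prop :=
  ∀ I J : Finset (Fin n), Disjoint I J → ∀ x y : Fin n → ℝ, (∀ j ∈ J, x j ≤ y j) →
    0 < Pr w (fun ω => ∀ j ∈ J, X ω j ≤ x j) →
    0 < Pr w (fun ω => ∀ j ∈ J, X ω j ≤ y j) →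
    CondSubvecStochLE w X I (fun ω => ∀ j ∈ J, X ω j ≤ y j)
      (fun ω => ∀ j ∈ J, X ω j ≤ x j)

/-- Negative right-tail dependence: `[X_I | X_J > x_J] ≥_st [X_I | X_J > x_J*]`
whenever `x_J ≤ x_J*` componentwise and both conditioning events have
positive probability. -/
def IsNRTD {Ω : Type*} [Fintype Ω] {n : ℕ} (w : Ω → ℝ) (X : Ω → Fin n → ℝ) : Prop :=
  ∀ I J : Finset (Fin n), Disjoint I J → ∀ x y : Fin n → ℝ, (∀ j ∈ J, x j ≤ y j) →
    0 < Pr w (fun ω => ∀ j ∈ J, x j < X ω j) →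
    0 < Pr w (fun ω => ∀ j ∈ J, y j < X ω j) →
    CondSubvecStochLE w X I (fun ω => ∀ j ∈ J, y j < X ω j)
      (fun ω => ∀ j ∈ J, x j < X ω j)

/-- Negative association on a finite weighted sample space:
`Cov(ψ₁(X_{A₁}), ψ₂(X_{A₂})) ≤ 0` for disjoint `A₁, A₂` and bounded
coordinatewise increasing `ψ₁, ψ₂`. -/
def IsNAfin {Ω : Type*} [Fintype Ω] {n : ℕ} (w : Ω → ℝ) (X : Ω → Fin n → ℝ) : Prop :=
  ∀ A₁ A₂ : Finset (Fin n), Disjoint A₁ A₂ →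
    ∀ ψ₁ : ({i : Fin n // i ∈ A₁} → ℝ) → ℝ, ∀ ψ₂ : ({i : Fin n // i ∈ A₂} → ℝ) → ℝ,
      Monotone ψ₁ → Monotone ψ₂ → (∃ C, ∀ v, |ψ₁ v| ≤ C) → (∃ C, ∀ v, |ψ₂ v| ≤ C) →
      Expec w (fun ω => (ψ₁ fun i => X ω i.1) * (ψ₂ fun i => X ω i.1))
        ≤ Expec w (fun ω => ψ₁ fun i => X ω i.1) * Expec w (fun ω => ψ₂ fun i => X ω i.1)

/-- The uniform distribution on the permutations of `Fin n`. -/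
def unifPerm (n : ℕ) : Equiv.Perm (Fin n) → ℝ := fun _ => (Nat.factorial n : ℝ)⁻¹

/-- The random vector with the permutation distribution on `a`:
`X = (a_{σ(1)}, …, a_{σ(n)})` for a uniformly random permutation `σ`. -/
def permVec {n : ℕ} (a : Fin n → ℝ) (σ : Equiv.Perm (Fin n)) : Fin n → ℝ :=
  fun i => a (σ i)

/-- The score vector uniformly distributed on the four points
`(1,0,2,0), (0,2,1,0), (1,0,0,2), (0,2,0,1)`. -/
def ko4Score : Fin 4 → Fin 4 → ℝ :=
  ![![1, 0, 2, 0], ![0, 2, 1, 0], ![1, 0, 0, 2], ![0, 2, 0, 1]]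

def ko4Unif : Fin 4 → ℝ := fun _ => (4 : ℝ)⁻¹

/-!
If `X` has negative regression (resp. left- or right-tail) dependence, then the conditional
mean of a coordinate `X i` can only decrease as the conditioning event on another coordinate
`X j` moves up: on a finite sample space, `X i` clamped to its finite range is a bounded
increasing test function. For the knockout score vector `S`, the conditional mean of `S₃`
strictly increases along `S₁ = 0 → S₁ = 1`, `S₁ ≤ 0 → S₁ ≤ 1` and `S₁ > -1 → S₁ > 1/2`.
-/

section CondMeanGap

variable {Ω : Type*} [Fintype Ω] {n : ℕ} (w : Ω → ℝ) (X : Ω → Fin n → ℝ)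

theorem exists_monotone_bounded_eq_coord (i : Fin n) :
    ∃ φ : ({k : Fin n // k ∈ ({i} : Finset (Fin n))} → ℝ) → ℝ, Monotone φ ∧
      (∃ C, ∀ v, |φ v| ≤ C) ∧ ∀ ω, (φ fun k => X ω k.1) = X ω i := by
  set C := ∑ ω, |X ω i|
  have hC : 0 ≤ C := sum_nonneg fun ω _ => abs_nonneg _
  have hX : ∀ ω, |X ω i| ≤ C := fun ω =>
    single_le_sum (f := fun ω => |X ω i|) (fun ω _ => abs_nonneg _) (mem_univ ω)
  refine ⟨fun v => max (min (v ⟨i, mem_singleton_self i⟩) C) (-C),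
    fun u v huv => max_le_max (min_le_min (huv _) le_rfl) le_rfl, ⟨C, fun v => ?_⟩, fun ω => ?_⟩
  · exact abs_le.2 ⟨le_max_right _ _, max_le (min_le_right _ _) (by linarith)⟩
  · obtain ⟨hlo, hhi⟩ := abs_le.1 (hX ω)
    simp only [min_eq_left hhi, max_eq_left hlo]

theorem not_condSubvecStochLE_of_cExp_lt {A B : Ω → Prop} {i : Fin n}
    (hlt : CExp w B (X · i) < CExp w A (X · i)) : ¬ CondSubvecStochLE w X {i} A B := by
  obtain ⟨φ, hmono, hbdd, hφ⟩ := exists_monotone_bounded_eq_coord X i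
  intro hle
  have := hle φ hmono hbdd
  simp only [hφ] at this
  linarith

variable {w X} {i j : Fin n} {a b : ℝ}

theorem not_isNRD_of_cExp_lt (hij : i ≠ j) (hab : a ≤ b)
    (ha : 0 < Pr w (X · j = a)) (hb : 0 < Pr w (X · j = b))
    (hlt : CExp w (X · j = a) (X · i) < CExp w (X · j = b) (X · i)) : ¬ IsNRD w X := by
  intro h
  have := h {i} {j} (disjoint_singleton.2 hij) (fun _ => a) (fun _ => b) (fun _ _ => hab)
  simp only [mem_singleton, forall_eq] at this
  exact not_condSubvecStochLE_of_cExp_lt w X hlt (this ha hb)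

theorem not_isNLTD_of_cExp_lt (hij : i ≠ j) (hab : a ≤ b)
    (ha : 0 < Pr w (X · j ≤ a)) (hb : 0 < Pr w (X · j ≤ b))
    (hlt : CExp w (X · j ≤ a) (X · i) < CExp w (X · j ≤ b) (X · i)) : ¬ IsNLTD w X := by
  intro h
  have := h {i} {j} (disjoint_singleton.2 hij) (fun _ => a) (fun _ => b) (fun _ _ => hab)
  simp only [mem_singleton, forall_eq] at this
  exact not_condSubvecStochLE_of_cExp_lt w X hlt (this ha hb)

theorem not_isNRTD_of_cExp_lt (hij : i ≠ j) (hab : a ≤ b)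
    (ha : 0 < Pr w (a < X · j)) (hb : 0 < Pr w (b < X · j))
    (hlt : CExp w (a < X · j) (X · i) < CExp w (b < X · j) (X · i)) : ¬ IsNRTD w X := by
  intro h
  have := h {i} {j} (disjoint_singleton.2 hij) (fun _ => a) (fun _ => b) (fun _ _ => hab)
  simp only [mem_singleton, forall_eq] at this
  exact not_condSubvecStochLE_of_cExp_lt w X hlt (this ha hb)

end CondMeanGap

-- The pair `(S₁, S₃)` is uniform on `(1,2), (0,1), (1,0), (0,0)`.
theorem ko4_pr_first (P : ℝ → Prop) :
    Pr ko4Unif (fun ω => P (ko4Score ω 0)) =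
      ((if P 1 then 1 else 0) + (if P 0 then 1 else 0)) / 2 := by
  simp [Pr, ko4Unif, ko4Score, Fin.sum_univ_four]
  by_cases h₁ : P 1 <;> by_cases h₀ : P 0 <;> simp [h₁, h₀] <;> norm_num

theorem ko4_pr_first_pos {P : ℝ → Prop} (h : P 0 ∨ P 1) :
    0 < Pr ko4Unif (fun ω => P (ko4Score ω 0)) := by
  rw [ko4_pr_first]
  rcases h with h | h <;> split_ifs <;> norm_num

theorem ko4_cExp_third_given_first (P : ℝ → Prop) :
    CExp ko4Unif (fun ω => P (ko4Score ω 0)) (ko4Score · 2) =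
      ((if P 1 then 2 else 0) + (if P 0 then 1 else 0)) /
        ((if P 1 then 2 else 0) + (if P 0 then 2 else 0)) := by
  simp [CExp, Pr, ko4Unif, ko4Score, Fin.sum_univ_four]
  by_cases h₁ : P 1 <;> by_cases h₀ : P 0 <;> simp [h₁, h₀] <;> norm_num

theorem knockout4_deterministic_draw_example_not_NRD_NLTD_NRTD :
    ¬ IsNRD ko4Unif ko4Score ∧ ¬ IsNLTD ko4Unif ko4Score ∧ ¬ IsNRTD ko4Unif ko4Score ∧
    CExp ko4Unif (fun ω => ko4Score ω 0 = 0) (fun ω => ko4Score ω 2) = 1 / 2 ∧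
    CExp ko4Unif (fun ω => ko4Score ω 0 = 1) (fun ω => ko4Score ω 2) = 1 ∧
    CExp ko4Unif (fun ω => ko4Score ω 0 = 0) (fun ω => ko4Score ω 2)
      < CExp ko4Unif (fun ω => ko4Score ω 0 = 1) (fun ω => ko4Score ω 2) ∧
    CExp ko4Unif (fun ω => ko4Score ω 0 ≤ 0) (fun ω => ko4Score ω 2) = 1 / 2 ∧
    CExp ko4Unif (fun ω => ko4Score ω 0 ≤ 1) (fun ω => ko4Score ω 2) = 3 / 4 ∧
    CExp ko4Unif (fun ω => ko4Score ω 0 ≤ 0) (fun ω => ko4Score ω 2)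
      < CExp ko4Unif (fun ω => ko4Score ω 0 ≤ 1) (fun ω => ko4Score ω 2) ∧
    CExp ko4Unif (fun ω => (0 : ℝ) ≤ ko4Score ω 0) (fun ω => ko4Score ω 2) = 3 / 4 ∧
    CExp ko4Unif (fun ω => (1 : ℝ) ≤ ko4Score ω 0) (fun ω => ko4Score ω 2) = 1 ∧
    CExp ko4Unif (fun ω => (0 : ℝ) ≤ ko4Score ω 0) (fun ω => ko4Score ω 2)
      < CExp ko4Unif (fun ω => (1 : ℝ) ≤ ko4Score ω 0) (fun ω => ko4Score ω 2) := by
  have eq₀ : CExp ko4Unif (ko4Score · 0 = 0) (ko4Score · 2) = 1 / 2 :=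
    (ko4_cExp_third_given_first (· = 0)).trans (by norm_num)
  have eq₁ : CExp ko4Unif (ko4Score · 0 = 1) (ko4Score · 2) = 1 :=
    (ko4_cExp_third_given_first (· = 1)).trans (by norm_num)
  have le₀ : CExp ko4Unif (ko4Score · 0 ≤ 0) (ko4Score · 2) = 1 / 2 :=
    (ko4_cExp_third_given_first (· ≤ 0)).trans (by norm_num)
  have le₁ : CExp ko4Unif (ko4Score · 0 ≤ 1) (ko4Score · 2) = 3 / 4 :=
    (ko4_cExp_third_given_first (· ≤ 1)).trans (by norm_num)
  have ge₀ : CExp ko4Unif ((0 : ℝ) ≤ ko4Score · 0) (ko4Score · 2) = 3 / 4 :=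
    (ko4_cExp_third_given_first ((0 : ℝ) ≤ ·)).trans (by norm_num)
  have ge₁ : CExp ko4Unif ((1 : ℝ) ≤ ko4Score · 0) (ko4Score · 2) = 1 :=
    (ko4_cExp_third_given_first ((1 : ℝ) ≤ ·)).trans (by norm_num)
  have gap_eq : CExp ko4Unif (ko4Score · 0 = 0) (ko4Score · 2)
      < CExp ko4Unif (ko4Score · 0 = 1) (ko4Score · 2) := by rw [eq₀, eq₁]; norm_num
  have gap_le : CExp ko4Unif (ko4Score · 0 ≤ 0) (ko4Score · 2)
      < CExp ko4Unif (ko4Score · 0 ≤ 1) (ko4Score · 2) := by rw [le₀, le₁]; norm_num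
  have gap_gt : CExp ko4Unif ((-1 : ℝ) < ko4Score · 0) (ko4Score · 2)
      < CExp ko4Unif ((1 / 2 : ℝ) < ko4Score · 0) (ko4Score · 2) := by
    rw [ko4_cExp_third_given_first ((-1 : ℝ) < ·),
      ko4_cExp_third_given_first ((1 / 2 : ℝ) < ·)]
    norm_num
  refine ⟨not_isNRD_of_cExp_lt (i := 2) (by decide) zero_le_one
      (ko4_pr_first_pos (P := (· = 0)) (by norm_num))
      (ko4_pr_first_pos (P := (· = 1)) (by norm_num))
      gap_eq,
    not_isNLTD_of_cExp_lt (i := 2) (by decide) zero_le_one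
      (ko4_pr_first_pos (P := (· ≤ 0)) (by norm_num))
      (ko4_pr_first_pos (P := (· ≤ 1)) (by norm_num))
      gap_le,
    not_isNRTD_of_cExp_lt (i := 2) (by decide) (by norm_num)
      (ko4_pr_first_pos (P := ((-1 : ℝ) < ·)) (by norm_num))
      (ko4_pr_first_pos (P := ((1 / 2 : ℝ) < ·)) (by norm_num)) gap_gt,
    eq₀, eq₁, gap_eq, le₀, le₁, gap_le, ge₀, ge₁, by rw [ge₀, ge₁]; norm_num⟩
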